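/- arXiv:2605.22159 — 5 statements merged into one kernel-verified Lean document; each statement's English description precedes it below -/
import Mathlib

section
/- If L is coercive with constant c_L, then the single-layer operator 𝖵 := γ ∘ S : B → X is coercive: |⟨𝖵 g, conj g⟩_{X×B}| ≥ (c_L / ‖L‖²) ‖g‖²_B for all g ∈ B. In particular 𝖵 is injective and the single-layer equation 𝖵 b = f is uniquely solvable for every f ∈ X. -/
open NormedSpace

/-- The adjoint (dual) trace map `γ' : B = X' → V'`, `g ↦ g ∘ γ`. -/
noncomputable def gammaAdj {V X : Type*} [NormedAddCommGroup V] [NormedSpace ℂ V]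
    [NormedAddCommGroup X] [NormedSpace ℂ X] (γ : V →L[ℂ] X) :
    StrongDual ℂ X →L[ℂ] StrongDual ℂ V :=
  (ContinuousLinearMap.compL ℂ V X ℂ).flip γ

/-!
Writing `u := N (γ' g)`, the pairing `g (γ u) = (γ' g) u = (L u) u` is bounded below by
`c_L ‖u‖²`, while the quotient norm on `X` makes `γ'` norm-nondecreasing, so that
`‖g‖ ≤ ‖γ' g‖ = ‖L u‖ ≤ ‖L‖ ‖u‖`. Combining the two gives the coercivity estimate.
A coercive operator `T : X' → X` is bounded below, hence injective with closed range, and an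
`x ⊥ range T` satisfies `⟪x, T (innerSL x)⟫ = 0`, which forces `x = 0`; so `T` is bijective.
-/

section DualCoercive

variable {𝕜 X : Type*} [RCLike 𝕜] [NormedAddCommGroup X] {c : ℝ}

theorem mul_norm_le_norm_apply_of_dual_coercive [NormedSpace 𝕜 X]
    {T : StrongDual 𝕜 X →L[𝕜] X} (hT : ∀ g : StrongDual 𝕜 X, c * ‖g‖ ^ 2 ≤ ‖g (T g)‖) (g : StrongDual 𝕜 X) :
    c * ‖g‖ ≤ ‖T g‖ := by
  rcases (norm_nonneg g).eq_or_lt with hg | hg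
  · rw [← hg, mul_zero]
    exact norm_nonneg _
  · refine le_of_mul_le_mul_right ?_ hg
    calc c * ‖g‖ * ‖g‖ = c * ‖g‖ ^ 2 := by ring
      _ ≤ ‖g (T g)‖ := hT g
      _ ≤ ‖g‖ * ‖T g‖ := g.le_opNorm _
      _ = ‖T g‖ * ‖g‖ := mul_comm _ _

theorem antilipschitz_of_dual_coercive [NormedSpace 𝕜 X] {T : StrongDual 𝕜 X →L[𝕜] X}
    (hc : 0 < c) (hT : ∀ g : StrongDual 𝕜 X, c * ‖g‖ ^ 2 ≤ ‖g (T g)‖) :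
    AntilipschitzWith (Real.toNNReal c⁻¹) T :=
  T.antilipschitz_of_bound fun g => by
    rw [Real.coe_toNNReal _ (inv_nonneg.mpr hc.le), le_inv_mul_iff₀ hc]
    exact mul_norm_le_norm_apply_of_dual_coercive hT g

theorem orthogonal_range_eq_bot_of_dual_coercive [InnerProductSpace 𝕜 X]
    {T : StrongDual 𝕜 X →L[𝕜] X} (hc : 0 < c) (hT : ∀ g : StrongDual 𝕜 X, c * ‖g‖ ^ 2 ≤ ‖g (T g)‖) :
    (LinearMap.range (T : StrongDual 𝕜 X →ₗ[𝕜] X))ᗮ = ⊥ := by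
  refine (Submodule.eq_bot_iff _).mpr fun x hx => ?_
  have hpair : innerSL 𝕜 x (T (innerSL 𝕜 x)) = 0 :=
    Submodule.inner_left_of_mem_orthogonal (LinearMap.mem_range_self _ _) hx
  have hnorm : c * ‖x‖ ^ 2 ≤ 0 := by
    simpa only [innerSL_apply_norm, hpair, norm_zero] using hT (innerSL 𝕜 x)
  by_contra hx0
  linarith [mul_pos hc (pow_pos (norm_pos_iff.mpr hx0) 2)]

theorem bijective_of_dual_coercive [InnerProductSpace 𝕜 X] [CompleteSpace X]
    {T : StrongDual 𝕜 X →L[𝕜] X} (hc : 0 < c) (hT : ∀ g : StrongDual 𝕜 X, c * ‖g‖ ^ 2 ≤ ‖g (T g)‖) :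
    Function.Bijective T := by
  have hanti := antilipschitz_of_dual_coercive hc hT
  refine ⟨hanti.injective, fun f => ?_⟩
  have hclosed : IsClosed (LinearMap.range (T : StrongDual 𝕜 X →ₗ[𝕜] X) : Set X) := by
    rw [LinearMap.coe_range, ContinuousLinearMap.coe_coe]
    exact hanti.isClosed_range T.uniformContinuous
  have htop : LinearMap.range (T : StrongDual 𝕜 X →ₗ[𝕜] X) = ⊤ := by
    rw [← hclosed.submodule_topologicalClosure_eq, Submodule.topologicalClosure_eq_top_iff]
    exact orthogonal_range_eq_bot_of_dual_coercive hc hT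
  exact LinearMap.mem_range.mp (htop ▸ Submodule.mem_top)

end DualCoercive

section SingleLayer

variable {V X : Type*} [NormedAddCommGroup V] [NormedSpace ℂ V]
  [NormedAddCommGroup X] [NormedSpace ℂ X] {γ : V →L[ℂ] X}

theorem norm_le_norm_gammaAdj_of_quotient_norm
    (hquot : ∀ t : X, ‖t‖ = ⨅ v : {v : V // γ v = t}, ‖(v : V)‖) (g : StrongDual ℂ X) :
    ‖g‖ ≤ ‖gammaAdj γ g‖ := by
  refine g.opNorm_le_bound (norm_nonneg _) fun t => ?_
  -- `⨅` over an empty index type is `0` in `ℝ`, so an empty fiber would force `t = 0 = γ 0`.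
  have hfiber : Nonempty {v : V // γ v = t} := by
    by_contra hempty
    rw [not_nonempty_iff] at hempty
    have ht : t = 0 := norm_eq_zero.mp ((hquot t).trans (Real.iInf_of_isEmpty _))
    exact hempty.false ⟨0, by rw [map_zero, ht]⟩
  rw [hquot t, Real.mul_iInf_of_nonneg (norm_nonneg _)]
  refine le_ciInf ?_
  rintro ⟨v, rfl⟩
  exact (gammaAdj γ g).le_opNorm v

/-- The single-layer boundary operator `𝖵 = γ ∘ N ∘ γ'`. -/
noncomputable def singleLayerOperator (γ : V →L[ℂ] X) (N : StrongDual ℂ V →L[ℂ] V) :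
    StrongDual ℂ X →L[ℂ] X :=
  γ ∘L N ∘L gammaAdj γ

theorem singleLayerOperator_coercive {L : V →L[ℂ] StrongDual ℂ V} {N : StrongDual ℂ V →L[ℂ] V}
    (hLN : ∀ f, L (N f) = f) {c K : ℝ} (hc : 0 ≤ c) (hcoer : ∀ v, c * ‖v‖ ^ 2 ≤ ‖L v v‖)
    (hK : ∀ v, ‖L v‖ ≤ K * ‖v‖)
    (hquot : ∀ t : X, ‖t‖ = ⨅ v : {v : V // γ v = t}, ‖(v : V)‖) (g : StrongDual ℂ X) :
    c / K ^ 2 * ‖g‖ ^ 2 ≤ ‖g (singleLayerOperator γ N g)‖ := by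
  set u := N (gammaAdj γ g)
  have hpair : g (singleLayerOperator γ N g) = L u u := by
    simp only [u, hLN]
    rfl
  have hg : ‖g‖ ≤ K * ‖u‖ :=
    calc ‖g‖ ≤ ‖gammaAdj γ g‖ := norm_le_norm_gammaAdj_of_quotient_norm hquot g
      _ = ‖L u‖ := by rw [hLN]
      _ ≤ K * ‖u‖ := hK u
  rcases eq_or_ne K 0 with rfl | hK0
  · simp
  calc c / K ^ 2 * ‖g‖ ^ 2 ≤ c / K ^ 2 * (K * ‖u‖) ^ 2 := by gcongr
    _ = c * ‖u‖ ^ 2 := by field_simp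
    _ ≤ ‖g (singleLayerOperator γ N g)‖ := hpair ▸ hcoer u

end SingleLayer

theorem singleLayer_operator_coercive_general
    {V X : Type*} [NormedAddCommGroup V] [InnerProductSpace ℂ V]
    [NormedAddCommGroup X] [InnerProductSpace ℂ X] [CompleteSpace X]
    (L : V →L[ℂ] StrongDual ℂ V) (N : StrongDual ℂ V →L[ℂ] V)
    (hLN : ∀ f, L (N f) = f)
    (c_L : ℝ) (hc : 0 < c_L)
    (hcoer : ∀ v : V, c_L * ‖v‖ ^ 2 ≤ ‖L v v‖)
    (γ : V →L[ℂ] X)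
    (hquot : ∀ t : X, ‖t‖ = ⨅ v : {v : V // γ v = t}, ‖(v : V)‖) :
    (∀ g : StrongDual ℂ X, c_L / ‖L‖ ^ 2 * ‖g‖ ^ 2 ≤ ‖g (γ (N (gammaAdj γ g)))‖) ∧
    Function.Injective (fun g : StrongDual ℂ X => γ (N (gammaAdj γ g))) ∧
    ∀ f : X, ∃! b : StrongDual ℂ X, γ (N (gammaAdj γ b)) = f := by
  have hcoercive := singleLayerOperator_coercive hLN hc.le hcoer L.le_opNorm hquot
  -- `‖L‖ + 1` keeps the constant positive even when `L = 0`.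
  have hbij : Function.Bijective (singleLayerOperator γ N) :=
    bijective_of_dual_coercive (by positivity : 0 < c_L / (‖L‖ + 1) ^ 2)
      (singleLayerOperator_coercive hLN hc.le hcoer
        (fun v => (L.le_opNorm v).trans (by gcongr; linarith)) hquot)
  exact ⟨hcoercive, hbij.injective, hbij.existsUnique⟩

/-- if `L` is coercive with constant `c_L`, the single-layer operator
`𝖵 := γ ∘ S : B → X`, `𝖵 g = γ (N (γ' g))`, is coercive:
`|⟨𝖵 g, ḡ⟩_{X×B}| ≥ (c_L/‖L‖²) ‖g‖²_B`; in particular `𝖵` is injective and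
`𝖵 b = f` is uniquely solvable for every `f ∈ X`. -/
theorem singleLayer_operator_coercive
    {V X : Type*} [NormedAddCommGroup V] [InnerProductSpace ℂ V] [CompleteSpace V]
    [NormedAddCommGroup X] [InnerProductSpace ℂ X] [CompleteSpace X]
    (L : V →L[ℂ] StrongDual ℂ V) (N : StrongDual ℂ V →L[ℂ] V)
    (hNL : ∀ v, N (L v) = v) (hLN : ∀ f, L (N f) = f)
    (c_L : ℝ) (hc : 0 < c_L)
    (hcoer : ∀ v : V, c_L * ‖v‖ ^ 2 ≤ ‖L v v‖)
    (γ : V →L[ℂ] X) (hγsurj : Function.Surjective γ)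
    (hquot : ∀ t : X, ‖t‖ = ⨅ v : {v : V // γ v = t}, ‖(v : V)‖) :
    (∀ g : StrongDual ℂ X, c_L / ‖L‖ ^ 2 * ‖g‖ ^ 2 ≤ ‖g (γ (N (gammaAdj γ g)))‖) ∧
    Function.Injective (fun g : StrongDual ℂ X => γ (N (gammaAdj γ g))) ∧
    ∀ f : X, ∃! b : StrongDual ℂ X, γ (N (gammaAdj γ b)) = f :=
  singleLayer_operator_coercive_general L N hLN c_L hc hcoer γ hquot
end

section
/- Consistency error bound: for the discrete single-layer operator 𝖵_d := γ P_d S, where P_d is the Galerkin projection onto V_d ⊂ V, the consistency error ε_con := sup_{g_h, h_h ∈ B_h, nonzero} |⟨(𝖵 − 𝖵_d) g_h, conj h_h⟩| / (‖g_h‖_B ‖h_h‖_B) satisfies ε_con ≤ C_reg(s) (‖L‖/c_L) · η_s(V_d)/β_s(B_h), where η_s(V_d) = sup_{w ∈ W^s, ‖w‖_{W^s}=1} inf_{v_d ∈ V_d} ‖w − v_d‖_V and β_s(B_h) = inf_{g_h ∈ B_h, ‖g_h‖_{B^s}=1} ‖g_h‖_B. -/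
/-!
The consistency error is the trace of the Galerkin error of the single-layer potential
`u = S g_h`. Since the trace has norm at most one for the quotient norm, it is bounded by
`‖u - P_d u‖_V`, which Céa's lemma bounds by `‖L‖/c_L` times the best approximation error of `u`
from `V_d`. That error is at most `η ‖u‖_{W^s} ≤ η C_reg ‖g_h‖_{B^s}`, and the Bernstein inequality
`β ‖g_h‖_{B^s} ≤ ‖g_h‖_B` returns to the norm of `B`.
-/

open NormedSpace

theorem norm_apply_le_of_norm_eq_iInf_fiber {E F : Type*} [SeminormedAddGroup E] [Norm F]
    (f : E → F) (hquot : ∀ t : F, ‖t‖ = ⨅ v : {v : E // f v = t}, ‖(v : E)‖) (v : E) :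
    ‖f v‖ ≤ ‖v‖ := by
  rw [hquot (f v)]
  refine ciInf_le ⟨0, ?_⟩ (⟨v, rfl⟩ : {w : E // f w = f v})
  rintro _ ⟨w, rfl⟩
  exact norm_nonneg _

section Galerkin

variable {𝕜 E : Type*} [NontriviallyNormedField 𝕜] [SeminormedAddCommGroup E]
  [NormedSpace 𝕜 E] {L : E →L[𝕜] StrongDual 𝕜 E} {P : E → E} {E_d : Submodule 𝕜 E}

theorem galerkin_orthogonality (hPgal : ∀ v : E, ∀ w ∈ E_d, L (P v) w = L v w) (v : E)
    {w : E} (hw : w ∈ E_d) : L (v - P v) w = 0 := by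
  rw [map_sub, sub_apply, hPgal v w hw, sub_self]

theorem norm_sub_galerkin_le {c : ℝ} (hc : 0 < c) (hcoer : ∀ v : E, c * ‖v‖ ^ 2 ≤ ‖L v v‖)
    (hPrange : ∀ v, P v ∈ E_d) (hPgal : ∀ v : E, ∀ w ∈ E_d, L (P v) w = L v w)
    (v : E) {w : E} (hw : w ∈ E_d) : ‖v - P v‖ ≤ ‖L‖ / c * ‖v - w‖ := by
  set e := v - P v
  have hdiag : L e e = L e (v - w) :=
    calc L e e = L e ((v - w) - (P v - w)) := by rw [sub_sub_sub_cancel_right]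
      _ = L e (v - w) := by
        rw [map_sub, galerkin_orthogonality hPgal v (E_d.sub_mem (hPrange v) hw), sub_zero]
  have hbound : c * ‖e‖ ^ 2 ≤ ‖L‖ * ‖v - w‖ * ‖e‖ :=
    calc c * ‖e‖ ^ 2 ≤ ‖L e (v - w)‖ := hdiag ▸ hcoer e
      _ ≤ ‖L e‖ * ‖v - w‖ := (L e).le_opNorm _
      _ ≤ ‖L‖ * ‖e‖ * ‖v - w‖ := by gcongr; exact L.le_opNorm e
      _ = ‖L‖ * ‖v - w‖ * ‖e‖ := by ring
  rcases (norm_nonneg e).eq_or_lt with he | he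
  · rw [← he]
    positivity
  · rw [div_mul_eq_mul_div, le_div_iff₀ hc]
    nlinarith

end Galerkin

theorem consistency_error_bound_general
    {V X : Type*} [NormedAddCommGroup V] [InnerProductSpace ℂ V]
    [NormedAddCommGroup X] [InnerProductSpace ℂ X]
    (L : V →L[ℂ] StrongDual ℂ V) (N : StrongDual ℂ V →L[ℂ] V)
    (c_L : ℝ) (hc : 0 < c_L)
    (hcoer : ∀ v : V, c_L * ‖v‖ ^ 2 ≤ ‖L v v‖)
    (γ : V →L[ℂ] X)
    (hquot : ∀ t : X, ‖t‖ = ⨅ v : {v : V // γ v = t}, ‖(v : V)‖)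
    (V_d : Submodule ℂ V)
    (P : V →L[ℂ] V) (hPrange : ∀ v, P v ∈ V_d)
    (hPgal : ∀ v : V, ∀ w ∈ V_d, L (P v) w = L v w)
    (B_h : Submodule ℂ (StrongDual ℂ X))
    (nBs : StrongDual ℂ X → ℝ) (nWs : V → ℝ)
    (C_reg η β : ℝ) (hCreg : 0 ≤ C_reg) (hη : 0 ≤ η) (hβ : 0 < β)
    (hreg : ∀ g ∈ B_h, nWs (N (gammaAdj γ g)) ≤ C_reg * nBs g)
    (happrox : ∀ g ∈ B_h, ∃ v_d ∈ V_d,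
      ‖N (gammaAdj γ g) - v_d‖ ≤ η * nWs (N (gammaAdj γ g)))
    (hbern : ∀ g ∈ B_h, β * nBs g ≤ ‖g‖) :
    ∀ g_h ∈ B_h, ∀ h_h ∈ B_h,
      ‖h_h (γ (N (gammaAdj γ g_h)) - γ (P (N (gammaAdj γ g_h))))‖ ≤
        C_reg * (‖L‖ / c_L) * (η / β) * ‖g_h‖ * ‖h_h‖ := by
  intro g_h hg h_h _
  set u := N (gammaAdj γ g_h)
  obtain ⟨v_d, hv_d, hu⟩ := happrox g_h hg
  have hnBs : nBs g_h ≤ ‖g_h‖ / β := by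
    rw [le_div_iff₀ hβ]
    linarith [hbern g_h hg]
  have hLc : 0 ≤ ‖L‖ / c_L := by positivity
  calc ‖h_h (γ u - γ (P u))‖ ≤ ‖h_h‖ * ‖γ (u - P u)‖ := map_sub γ u (P u) ▸ h_h.le_opNorm _
    _ ≤ ‖h_h‖ * ‖u - P u‖ := by gcongr; exact norm_apply_le_of_norm_eq_iInf_fiber γ hquot _
    _ ≤ ‖h_h‖ * (‖L‖ / c_L * ‖u - v_d‖) := by
        gcongr; exact norm_sub_galerkin_le hc hcoer hPrange hPgal u hv_d
    _ ≤ ‖h_h‖ * (‖L‖ / c_L * (η * (C_reg * (‖g_h‖ / β)))) := by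
        gcongr
        calc ‖u - v_d‖ ≤ η * nWs u := hu
          _ ≤ η * (C_reg * nBs g_h) := by gcongr; exact hreg g_h hg
          _ ≤ η * (C_reg * (‖g_h‖ / β)) := by gcongr
    _ = C_reg * (‖L‖ / c_L) * (η / β) * ‖g_h‖ * ‖h_h‖ := by ring

/-- consistency error bound `ε_con ≤ C_reg(s) (‖L‖/c_L) η_s(V_d)/β_s(B_h)`
for the discrete single-layer operator `𝖵_d := γ P_d S`.  The approximation quality
`η = η_s(V_d)` of the volume space, the Bernstein constant `β = β_s(B_h)` of the
boundary space and the regularity-shift norm `C_reg` of `S : B^s → W^s` enter through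
the scale norms `nBs`, `nWs`. -/
theorem consistency_error_bound
    {V X : Type*} [NormedAddCommGroup V] [InnerProductSpace ℂ V] [CompleteSpace V]
    [NormedAddCommGroup X] [InnerProductSpace ℂ X] [CompleteSpace X]
    (L : V →L[ℂ] StrongDual ℂ V) (N : StrongDual ℂ V →L[ℂ] V)
    (hNL : ∀ v, N (L v) = v) (hLN : ∀ f, L (N f) = f)
    (c_L : ℝ) (hc : 0 < c_L)
    (hcoer : ∀ v : V, c_L * ‖v‖ ^ 2 ≤ ‖L v v‖)
    (γ : V →L[ℂ] X) (hγsurj : Function.Surjective γ)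
    (hquot : ∀ t : X, ‖t‖ = ⨅ v : {v : V // γ v = t}, ‖(v : V)‖)
    (V_d : Submodule ℂ V) [FiniteDimensional ℂ V_d]
    (P : V →L[ℂ] V) (hPrange : ∀ v, P v ∈ V_d)
    (hPgal : ∀ v : V, ∀ w ∈ V_d, L (P v) w = L v w)
    (B_h : Submodule ℂ (StrongDual ℂ X)) [FiniteDimensional ℂ B_h]
    (nBs : StrongDual ℂ X → ℝ) (nWs : V → ℝ)
    (C_reg η β : ℝ) (hCreg : 0 ≤ C_reg) (hη : 0 ≤ η) (hβ : 0 < β)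
    (hreg : ∀ g ∈ B_h, nWs (N (gammaAdj γ g)) ≤ C_reg * nBs g)
    (happrox : ∀ g ∈ B_h, ∃ v_d ∈ V_d,
      ‖N (gammaAdj γ g) - v_d‖ ≤ η * nWs (N (gammaAdj γ g)))
    (hbern : ∀ g ∈ B_h, β * nBs g ≤ ‖g‖) :
    ∀ g_h ∈ B_h, ∀ h_h ∈ B_h,
      ‖h_h (γ (N (gammaAdj γ g_h)) - γ (P (N (gammaAdj γ g_h))))‖ ≤
        C_reg * (‖L‖ / c_L) * (η / β) * ‖g_h‖ * ‖h_h‖ :=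
  consistency_error_bound_general L N c_L hc hcoer γ hquot V_d P hPrange hPgal B_h nBs nWs C_reg η β
    hCreg hη hβ hreg happrox hbern
end

section
/- Quasi-best approximation of kernel-free BEM: if the consistency error satisfies ε_con ≤ c_L/(2‖L‖²), then the discrete problem ⟨𝖵_d b_h, conj g_h⟩ = ⟨f, conj g_h⟩ for all g_h ∈ B_h has a unique solution b_h ∈ B_h, and with C_qb := 2‖L‖³ max{1, 2‖N‖}/c_L² it holds ‖b − b_h‖_B ≤ C_qb (min_{g_h ∈ B_h} ‖b − g_h‖_B + min_{v_d ∈ V_d} ‖S b − v_d‖_V). -/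
/-!
On `B_h` the discrete operator `𝖵_d = γ P_d S` differs from `𝖵 = γ S`, which is coercive with
constant `c_L / ‖L‖²`, by at most `ε_con ≤ c_L / (2 ‖L‖²)`; hence `𝖵_d` is coercive on `B_h` with
half that constant, and the finite-dimensional discrete problem is uniquely solvable. Testing the
discrete and the continuous equation with `e = g_h - b_h` gives
`⟨𝖵_d e, e⟩ = ⟨γ (P_d S g_h - S b), e⟩`, and the stability and the Céa estimate of the Galerkin
projector `P_d` bound `‖P_d S g_h - S b‖` by `‖L‖ / c_L · (‖N‖ ‖b - g_h‖ + ‖S b - v_d‖)`.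
-/

open NormedSpace

theorem mul_le_of_mul_sq_le_mul {c t s : ℝ} (ht : 0 ≤ t) (hs : 0 ≤ s) (h : c * t ^ 2 ≤ s * t) :
    c * t ≤ s := by
  rcases ht.eq_or_lt with rfl | ht
  · simpa using hs
  · exact le_of_mul_le_mul_right (by rwa [mul_assoc, ← sq]) ht

theorem add_le_quasiBest_mul {c l n A D E : ℝ} (hc : 0 < c) (hcl : c ≤ l) (hln : 1 ≤ l * n)
    (hA : 0 ≤ A) (hD : 0 ≤ D) (hE : c ^ 2 * E ≤ 2 * l ^ 3 * (n * A + D)) :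
    A + E ≤ 2 * l ^ 3 * max 1 (2 * n) / c ^ 2 * (A + D) := by
  have hl : 0 < l := hc.trans_le hcl
  have hn : 0 ≤ n := by nlinarith
  have hc2 : c ^ 2 ≤ l ^ 3 * n :=
    calc c ^ 2 ≤ l ^ 2 * 1 := by rw [mul_one]; gcongr
      _ ≤ l ^ 2 * (l * n) := by gcongr
      _ = l ^ 3 * n := by ring
  have hM1 : 1 ≤ max 1 (2 * n) := le_max_left _ _
  have hM2 : 2 * n ≤ max 1 (2 * n) := le_max_right _ _
  rw [div_mul_eq_mul_div, le_div_iff₀ (by positivity)]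
  calc (A + E) * c ^ 2 = c ^ 2 * A + c ^ 2 * E := by ring
    _ ≤ l ^ 3 * n * A + 2 * l ^ 3 * (n * A + D) := by gcongr
    _ ≤ 2 * l ^ 3 * (2 * n * A + 1 * D) := by
        linarith [mul_nonneg (mul_nonneg (pow_pos hl 3).le hn) hA]
    _ ≤ 2 * l ^ 3 * (max 1 (2 * n) * A + max 1 (2 * n) * D) := by gcongr
    _ = 2 * l ^ 3 * max 1 (2 * n) * (A + D) := by ring

section Coercive

variable {𝕜 V : Type*} [NontriviallyNormedField 𝕜] [NormedAddCommGroup V] [NormedSpace 𝕜 V]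
  {L : V →L[𝕜] StrongDual 𝕜 V} {c : ℝ}

theorem le_opNorm_of_coercive [Nontrivial V] (hcoer : ∀ v, c * ‖v‖ ^ 2 ≤ ‖L v v‖) : c ≤ ‖L‖ := by
  obtain ⟨v, hv⟩ := exists_ne (0 : V)
  refine le_of_mul_le_mul_right ?_ (pow_pos (norm_pos_iff.2 hv) 2)
  calc c * ‖v‖ ^ 2 ≤ ‖L v v‖ := hcoer v
    _ ≤ ‖L‖ * ‖v‖ * ‖v‖ := L.le_opNorm₂ v v
    _ = ‖L‖ * ‖v‖ ^ 2 := by ring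

theorem one_le_opNorm_mul_opNorm_of_inverse [Nontrivial V] {N : StrongDual 𝕜 V →L[𝕜] V}
    (hNL : ∀ v, N (L v) = v) (hLN : ∀ φ, L (N φ) = φ) : 1 ≤ ‖L‖ * ‖N‖ :=
  (ContinuousLinearEquiv.equivOfInverse L N hNL hLN).one_le_norm_mul_norm_symm

theorem coercive_of_rightInverse {N : StrongDual 𝕜 V →L[𝕜] V} (hLN : ∀ φ, L (N φ) = φ)
    (hc : 0 ≤ c) (hcoer : ∀ v, c * ‖v‖ ^ 2 ≤ ‖L v v‖) (φ : StrongDual 𝕜 V) :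
    c * ‖φ‖ ^ 2 ≤ ‖L‖ ^ 2 * ‖φ (N φ)‖ := by
  have hφ : ‖φ‖ ≤ ‖L‖ * ‖N φ‖ := by simpa only [hLN] using L.le_opNorm (N φ)
  calc c * ‖φ‖ ^ 2 ≤ c * (‖L‖ * ‖N φ‖) ^ 2 := by gcongr
    _ = ‖L‖ ^ 2 * (c * ‖N φ‖ ^ 2) := by ring
    _ ≤ ‖L‖ ^ 2 * ‖φ (N φ)‖ := by gcongr; simpa only [hLN] using hcoer (N φ)

theorem mul_norm_galerkin_le {V_d : Submodule 𝕜 V} {P : V → V}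
    (hcoer : ∀ v, c * ‖v‖ ^ 2 ≤ ‖L v v‖) (hPrange : ∀ v, P v ∈ V_d)
    (hPgal : ∀ v, ∀ w ∈ V_d, L (P v) w = L v w) (v : V) : c * ‖P v‖ ≤ ‖L‖ * ‖v‖ := by
  refine mul_le_of_mul_sq_le_mul (norm_nonneg _) (by positivity) ?_
  calc c * ‖P v‖ ^ 2 ≤ ‖L (P v) (P v)‖ := hcoer _
    _ = ‖L v (P v)‖ := by rw [hPgal v _ (hPrange v)]
    _ ≤ ‖L‖ * ‖v‖ * ‖P v‖ := L.le_opNorm₂ _ _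

theorem mul_norm_galerkin_sub_self_le {V_d : Submodule 𝕜 V} {P : V → V}
    (hcoer : ∀ v, c * ‖v‖ ^ 2 ≤ ‖L v v‖) (hPrange : ∀ v, P v ∈ V_d)
    (hPgal : ∀ v, ∀ w ∈ V_d, L (P v) w = L v w) (w : V) {v_d : V} (hv_d : v_d ∈ V_d) :
    c * ‖P w - w‖ ≤ ‖L‖ * ‖w - v_d‖ := by
  have horth : L (P w - w) (P w - v_d) = 0 := by
    rw [map_sub L, sub_apply, hPgal w _ (sub_mem (hPrange w) hv_d), sub_self]
  have hsplit : L (P w - w) (P w - w) = L (P w - w) (P w - v_d) + L (P w - w) (v_d - w) := by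
    rw [← map_add, sub_add_sub_cancel]
  refine mul_le_of_mul_sq_le_mul (norm_nonneg _) (by positivity) ?_
  calc c * ‖P w - w‖ ^ 2 ≤ ‖L (P w - w) (P w - w)‖ := hcoer _
    _ = ‖L (P w - w) (v_d - w)‖ := by rw [hsplit, horth, zero_add]
    _ ≤ ‖L‖ * ‖P w - w‖ * ‖v_d - w‖ := L.le_opNorm₂ _ _
    _ = ‖L‖ * ‖w - v_d‖ * ‖P w - w‖ := by rw [norm_sub_rev v_d w]; ring

theorem mul_norm_galerkin_sub_le {V_d : Submodule 𝕜 V} {P : V →L[𝕜] V}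
    {N : StrongDual 𝕜 V →L[𝕜] V} (hc : 0 ≤ c) (hcoer : ∀ v, c * ‖v‖ ^ 2 ≤ ‖L v v‖)
    (hPrange : ∀ v, P v ∈ V_d) (hPgal : ∀ v, ∀ w ∈ V_d, L (P v) w = L v w)
    (φ ψ : StrongDual 𝕜 V) {v_d : V} (hv_d : v_d ∈ V_d) :
    c * ‖P (N φ) - N ψ‖ ≤ ‖L‖ * (‖N‖ * ‖ψ - φ‖ + ‖N ψ - v_d‖) := by
  have hsplit : P (N φ) - N ψ = P (N (φ - ψ)) + (P (N ψ) - N ψ) := by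
    simp only [map_sub]; abel
  calc c * ‖P (N φ) - N ψ‖ ≤ c * ‖P (N (φ - ψ))‖ + c * ‖P (N ψ) - N ψ‖ := by
        rw [hsplit, ← mul_add]; gcongr; exact norm_add_le _ _
    _ ≤ ‖L‖ * ‖N (φ - ψ)‖ + ‖L‖ * ‖N ψ - v_d‖ :=
        add_le_add (mul_norm_galerkin_le hcoer hPrange hPgal _)
          (mul_norm_galerkin_sub_self_le hcoer hPrange hPgal _ hv_d)
    _ ≤ ‖L‖ * (‖N‖ * ‖ψ - φ‖ + ‖N ψ - v_d‖) := by
        rw [norm_sub_rev ψ φ, ← mul_add]; gcongr; exact N.le_opNorm _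

end Coercive

section Trace

variable {V X : Type*} [NormedAddCommGroup V] [NormedSpace ℂ V] [NormedAddCommGroup X]
  [NormedSpace ℂ X] {γ : V →L[ℂ] X}

@[simp]
theorem gammaAdj_apply (g : StrongDual ℂ X) (v : V) : gammaAdj γ g v = g (γ v) := rfl

theorem norm_le_of_quotient_norm (hquot : ∀ t : X, ‖t‖ = ⨅ v : {v : V // γ v = t}, ‖(v : V)‖)
    (v : V) : ‖γ v‖ ≤ ‖v‖ := by
  rw [hquot]
  exact ciInf_le ⟨0, Set.forall_mem_range.2 fun _ => norm_nonneg _⟩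
    (⟨v, rfl⟩ : {v' : V // γ v' = γ v})

theorem norm_gammaAdj_le (hquot : ∀ t : X, ‖t‖ = ⨅ v : {v : V // γ v = t}, ‖(v : V)‖)
    (g : StrongDual ℂ X) : ‖gammaAdj γ g‖ ≤ ‖g‖ :=
  ContinuousLinearMap.opNorm_le_bound _ (norm_nonneg g) fun v =>
    (g.le_opNorm (γ v)).trans (by gcongr; exact norm_le_of_quotient_norm hquot v)

theorem norm_gammaAdj (hsurj : Function.Surjective γ)
    (hquot : ∀ t : X, ‖t‖ = ⨅ v : {v : V // γ v = t}, ‖(v : V)‖) (g : StrongDual ℂ X) :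
    ‖gammaAdj γ g‖ = ‖g‖ := by
  refine le_antisymm (norm_gammaAdj_le hquot g)
    (ContinuousLinearMap.opNorm_le_bound _ (norm_nonneg _) fun t => ?_)
  have : Nonempty {v : V // γ v = t} := let ⟨v, hv⟩ := hsurj t; ⟨⟨v, hv⟩⟩
  rw [hquot t, Real.mul_iInf_of_nonneg (norm_nonneg _)]
  exact le_ciInf fun ⟨v, hv⟩ => hv ▸ (gammaAdj γ g).le_opNorm v

end Trace

theorem existsUnique_galerkin_solution {𝕜 X : Type*} [NontriviallyNormedField 𝕜]
    [NormedAddCommGroup X] [NormedSpace 𝕜 X] (A : StrongDual 𝕜 X →ₗ[𝕜] X)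
    (W : Submodule 𝕜 (StrongDual 𝕜 X)) [FiniteDimensional 𝕜 W]
    (hA : ∀ g ∈ W, g (A g) = 0 → g = 0) (f : X) :
    ∃! w : W, ∀ g ∈ W, g (A w) = g f := by
  let a : LinearMap.BilinForm 𝕜 W :=
    LinearMap.mk₂ 𝕜 (fun u w => (w : StrongDual 𝕜 X) (A u)) (by simp) (by simp) (by simp)
      (by simp)
  have ha : a.SeparatingLeft := fun u hu => Submodule.coe_eq_zero.1 (hA u u.2 (hu u))
  let ℓ : Module.Dual 𝕜 W :=
    { toFun w := (w : StrongDual 𝕜 X) f, map_add' := by simp, map_smul' := by simp }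
  have : Module.Free 𝕜 W := Module.Free.of_divisionRing 𝕜 W
  refine (existsUnique_congr fun u => ?_).mp
    ((a.toDual (.ofSeparatingLeft ha)).bijective.existsUnique ℓ)
  simp [LinearMap.ext_iff, LinearMap.BilinForm.toDual_def, a, ℓ]

section Discrete

variable {V X : Type*} [NormedAddCommGroup V] [NormedSpace ℂ V] [NormedAddCommGroup X]
  [NormedSpace ℂ X] {L : V →L[ℂ] StrongDual ℂ V} {N : StrongDual ℂ V →L[ℂ] V} {γ : V →L[ℂ] X}
  {P : V →L[ℂ] V} {c ε : ℝ}

theorem coercive_galerkin_of_consistency (hsurj : Function.Surjective γ)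
    (hquot : ∀ t : X, ‖t‖ = ⨅ v : {v : V // γ v = t}, ‖(v : V)‖) (hLN : ∀ φ, L (N φ) = φ)
    (hc : 0 ≤ c) (hcoer : ∀ v, c * ‖v‖ ^ 2 ≤ ‖L v v‖) (hsmall : ε ≤ c / (2 * ‖L‖ ^ 2))
    (g : StrongDual ℂ X)
    (hg : ‖g (γ (N (gammaAdj γ g)) - γ (P (N (gammaAdj γ g))))‖ ≤ ε * ‖g‖ * ‖g‖) :
    c * ‖g‖ ^ 2 ≤ 2 * ‖L‖ ^ 2 * ‖g (γ (P (N (gammaAdj γ g))))‖ := by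
  have hcont : c * ‖g‖ ^ 2 ≤ ‖L‖ ^ 2 * ‖g (γ (N (gammaAdj γ g)))‖ := by
    simpa only [norm_gammaAdj hsurj hquot, gammaAdj_apply] using
      coercive_of_rightInverse hLN hc hcoer (gammaAdj γ g)
  have htri : ‖g (γ (N (gammaAdj γ g)))‖ ≤
      ‖g (γ (P (N (gammaAdj γ g))))‖ + ε * ‖g‖ * ‖g‖ := by
    rw [map_sub] at hg
    linarith [norm_le_norm_add_norm_sub' (g (γ (N (gammaAdj γ g))))
      (g (γ (P (N (gammaAdj γ g)))))]
  have hεL : ε * (2 * ‖L‖ ^ 2) ≤ c := mul_le_of_le_div₀ hc (by positivity) hsmall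
  linarith [mul_le_mul_of_nonneg_left htri (sq_nonneg ‖L‖),
    mul_le_mul_of_nonneg_right hεL (sq_nonneg ‖g‖)]

theorem galerkin_error_le {V_d : Submodule ℂ V}
    (hquot : ∀ t : X, ‖t‖ = ⨅ v : {v : V // γ v = t}, ‖(v : V)‖) (hc : 0 ≤ c)
    (hcoer : ∀ v, c * ‖v‖ ^ 2 ≤ ‖L v v‖) (hPrange : ∀ v, P v ∈ V_d)
    (hPgal : ∀ v, ∀ w ∈ V_d, L (P v) w = L v w) {b b_h g_h : StrongDual ℂ X}
    (hdisc : c * ‖g_h - b_h‖ ^ 2 ≤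
      2 * ‖L‖ ^ 2 * ‖(g_h - b_h) (γ (P (N (gammaAdj γ (g_h - b_h)))))‖)
    (horth : (g_h - b_h) (γ (P (N (gammaAdj γ b_h)))) = (g_h - b_h) (γ (N (gammaAdj γ b))))
    {v_d : V} (hv_d : v_d ∈ V_d) :
    c ^ 2 * ‖g_h - b_h‖ ≤ 2 * ‖L‖ ^ 3 * (‖N‖ * ‖b - g_h‖ + ‖N (gammaAdj γ b) - v_d‖) := by
  set e := g_h - b_h
  set R := P (N (gammaAdj γ g_h)) - N (gammaAdj γ b)
  have herr : e (γ (P (N (gammaAdj γ e)))) = e (γ R) := by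
    simp only [e, R, map_sub] at horth ⊢
    rw [horth]
  have heR : c * ‖e‖ ≤ 2 * ‖L‖ ^ 2 * ‖R‖ := by
    refine mul_le_of_mul_sq_le_mul (norm_nonneg _) (by positivity) (hdisc.trans ?_)
    calc 2 * ‖L‖ ^ 2 * ‖e (γ (P (N (gammaAdj γ e))))‖ ≤ 2 * ‖L‖ ^ 2 * (‖e‖ * ‖R‖) := by
          rw [herr]; gcongr
          exact (e.le_opNorm _).trans (by gcongr; exact norm_le_of_quotient_norm hquot R)
      _ = 2 * ‖L‖ ^ 2 * ‖R‖ * ‖e‖ := by ring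
  have hR : c * ‖R‖ ≤ ‖L‖ * (‖N‖ * ‖b - g_h‖ + ‖N (gammaAdj γ b) - v_d‖) := by
    refine (mul_norm_galerkin_sub_le hc hcoer hPrange hPgal _ _ hv_d).trans ?_
    rw [← map_sub]; gcongr; exact norm_gammaAdj_le hquot _
  calc c ^ 2 * ‖e‖ = c * (c * ‖e‖) := by ring
    _ ≤ c * (2 * ‖L‖ ^ 2 * ‖R‖) := by gcongr
    _ = 2 * ‖L‖ ^ 2 * (c * ‖R‖) := by ring
    _ ≤ 2 * ‖L‖ ^ 2 * (‖L‖ * (‖N‖ * ‖b - g_h‖ + ‖N (gammaAdj γ b) - v_d‖)) := by gcongr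
    _ = _ := by ring

end Discrete

theorem kernel_free_BEM_quasi_best_general
    {V X : Type*} [NormedAddCommGroup V] [InnerProductSpace ℂ V]
    [NormedAddCommGroup X] [InnerProductSpace ℂ X]
    (L : V →L[ℂ] StrongDual ℂ V) (N : StrongDual ℂ V →L[ℂ] V)
    (hNL : ∀ v, N (L v) = v) (hLN : ∀ f, L (N f) = f)
    (c_L : ℝ) (hc : 0 < c_L)
    (hcoer : ∀ v : V, c_L * ‖v‖ ^ 2 ≤ ‖L v v‖)
    (γ : V →L[ℂ] X) (hγsurj : Function.Surjective γ)
    (hquot : ∀ t : X, ‖t‖ = ⨅ v : {v : V // γ v = t}, ‖(v : V)‖)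
    (V_d : Submodule ℂ V)
    (P : V →L[ℂ] V) (hPrange : ∀ v, P v ∈ V_d)
    (hPgal : ∀ v : V, ∀ w ∈ V_d, L (P v) w = L v w)
    (B_h : Submodule ℂ (StrongDual ℂ X)) [FiniteDimensional ℂ B_h]
    (ε_con : ℝ)
    (hεcon : ∀ g_h ∈ B_h, ∀ h_h ∈ B_h,
      ‖h_h (γ (N (gammaAdj γ g_h)) - γ (P (N (gammaAdj γ g_h))))‖ ≤
        ε_con * ‖g_h‖ * ‖h_h‖)
    (hsmall : ε_con ≤ c_L / (2 * ‖L‖ ^ 2))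
    (f : X) (b : StrongDual ℂ X)
    (hb : γ (N (gammaAdj γ b)) = f) :
    (∃! b_h : B_h, ∀ g_h ∈ B_h, g_h (γ (P (N (gammaAdj γ (b_h : StrongDual ℂ X))))) = g_h f) ∧
    ∀ b_h ∈ B_h, (∀ g_h ∈ B_h, g_h (γ (P (N (gammaAdj γ b_h)))) = g_h f) →
      ∀ g_h ∈ B_h, ∀ v_d ∈ V_d,
        ‖b - b_h‖ ≤ 2 * ‖L‖ ^ 3 * max 1 (2 * ‖N‖) / c_L ^ 2 *
          (‖b - g_h‖ + ‖N (gammaAdj γ b) - v_d‖) := by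
  have hdisc : ∀ g ∈ B_h, c_L * ‖g‖ ^ 2 ≤ 2 * ‖L‖ ^ 2 * ‖g (γ (P (N (gammaAdj γ g))))‖ :=
    fun g hg => coercive_galerkin_of_consistency hγsurj hquot hLN hc.le hcoer hsmall g
      (hεcon g hg g hg)
  refine ⟨existsUnique_galerkin_solution (γ ∘L P ∘L N ∘L gammaAdj γ : _ →L[ℂ] X).toLinearMap B_h
    (fun g hg hg0 => ?_) f, fun b_h hb_h hsol g_h hg_h v_d hv_d => ?_⟩
  · have := hdisc g hg
    rw [show g (γ (P (N (gammaAdj γ g)))) = 0 from hg0, norm_zero, mul_zero] at this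
    exact norm_eq_zero.1 <| (pow_eq_zero_iff two_ne_zero).1 <|
      le_antisymm (nonpos_of_mul_nonpos_right this hc) (sq_nonneg _)
  rcases subsingleton_or_nontrivial V with hV | hV
  · have : b - b_h = 0 := by
      rw [← norm_eq_zero, ← norm_gammaAdj hγsurj hquot, Subsingleton.elim (gammaAdj γ _) 0,
        norm_zero]
    rw [this, norm_zero]
    positivity
  have he := galerkin_error_le hquot hc.le hcoer hPrange hPgal
    (hdisc _ (sub_mem hg_h hb_h)) (by rw [hsol _ (sub_mem hg_h hb_h), hb]) hv_d
  calc ‖b - b_h‖ ≤ ‖b - g_h‖ + ‖g_h - b_h‖ := norm_sub_le_norm_sub_add_norm_sub _ _ _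
    _ ≤ _ := add_le_quasiBest_mul hc (le_opNorm_of_coercive hcoer)
        (one_le_opNorm_mul_opNorm_of_inverse hNL hLN) (norm_nonneg _) (norm_nonneg _) he

/-- quasi-best approximation of the kernel-free BEM.  If the consistency
error `ε_con ≤ c_L/(2‖L‖²)`, then the discrete problem
`⟨𝖵_d b_h, ḡ_h⟩ = ⟨f, ḡ_h⟩ ∀ g_h ∈ B_h` (with `𝖵_d = γ P_d S`) has a unique solution
`b_h ∈ B_h`, and with `C_qb = 2‖L‖³ max{1, 2‖N‖}/c_L²` one has
`‖b − b_h‖ ≤ C_qb (min_{g_h∈B_h}‖b − g_h‖ + min_{v_d∈V_d}‖S b − v_d‖)`. -/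
theorem kernel_free_BEM_quasi_best
    {V X : Type*} [NormedAddCommGroup V] [InnerProductSpace ℂ V] [CompleteSpace V]
    [NormedAddCommGroup X] [InnerProductSpace ℂ X] [CompleteSpace X]
    (L : V →L[ℂ] StrongDual ℂ V) (N : StrongDual ℂ V →L[ℂ] V)
    (hNL : ∀ v, N (L v) = v) (hLN : ∀ f, L (N f) = f)
    (c_L : ℝ) (hc : 0 < c_L)
    (hcoer : ∀ v : V, c_L * ‖v‖ ^ 2 ≤ ‖L v v‖)
    (γ : V →L[ℂ] X) (hγsurj : Function.Surjective γ)
    (hquot : ∀ t : X, ‖t‖ = ⨅ v : {v : V // γ v = t}, ‖(v : V)‖)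
    (V_d : Submodule ℂ V) [FiniteDimensional ℂ V_d]
    (P : V →L[ℂ] V) (hPrange : ∀ v, P v ∈ V_d)
    (hPgal : ∀ v : V, ∀ w ∈ V_d, L (P v) w = L v w)
    (B_h : Submodule ℂ (StrongDual ℂ X)) [FiniteDimensional ℂ B_h]
    (ε_con : ℝ)
    (hεcon : ∀ g_h ∈ B_h, ∀ h_h ∈ B_h,
      ‖h_h (γ (N (gammaAdj γ g_h)) - γ (P (N (gammaAdj γ g_h))))‖ ≤
        ε_con * ‖g_h‖ * ‖h_h‖)
    (hsmall : ε_con ≤ c_L / (2 * ‖L‖ ^ 2))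
    (f : X) (b : StrongDual ℂ X)
    (hb : γ (N (gammaAdj γ b)) = f) :
    (∃! b_h : B_h, ∀ g_h ∈ B_h, g_h (γ (P (N (gammaAdj γ (b_h : StrongDual ℂ X))))) = g_h f) ∧
    ∀ b_h ∈ B_h, (∀ g_h ∈ B_h, g_h (γ (P (N (gammaAdj γ b_h)))) = g_h f) →
      ∀ g_h ∈ B_h, ∀ v_d ∈ V_d,
        ‖b - b_h‖ ≤ 2 * ‖L‖ ^ 3 * max 1 (2 * ‖N‖) / c_L ^ 2 *
          (‖b - g_h‖ + ‖N (gammaAdj γ b) - v_d‖) :=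
  kernel_free_BEM_quasi_best_general L N hNL hLN c_L hc hcoer γ hγsurj hquot V_d P hPrange hPgal B_h
    ε_con hεcon hsmall f b hb
end

section
/- Coercivity of the discrete single-layer operator: if ε_con ≤ c_L/(2‖L‖²), then 𝖵_d is coercive on B_h with |⟨𝖵_d g_h, conj g_h⟩| ≥ (c_L/(2‖L‖²)) ‖g_h‖²_B for all g_h ∈ B_h; in particular the discrete problem is well posed. -/
open NormedSpace

/-!
Write `v := N (γ' g)`, so that `L v = γ' g` and `⟨𝖵 g, g⟩ = g (γ v)`. Since `X` carries the
quotient norm of `γ`, the adjoint `γ'` does not decrease norms, hence `‖g‖ ≤ ‖L v‖ ≤ ‖L‖ ‖v‖`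
and coercivity of `L` gives the continuous bound `(c_L/‖L‖²) ‖g‖² ≤ ‖g (γ v)‖`. The consistency
error `ε_con ≤ c_L/(2‖L‖²)` then costs at most half of this bound when `v` is replaced by `P v`.
-/

namespace ContinuousLinearMap

variable {𝕜 V X F : Type*} [NontriviallyNormedField 𝕜]
  [SeminormedAddCommGroup V] [NormedSpace 𝕜 V] [SeminormedAddCommGroup X] [NormedSpace 𝕜 X]
  [SeminormedAddCommGroup F] [NormedSpace 𝕜 F]

theorem opNorm_le_opNorm_comp_of_norm_eq_iInf {γ : V →L[𝕜] X} (hγ : Function.Surjective γ)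
    (hquot : ∀ t : X, ‖t‖ = ⨅ v : {v : V // γ v = t}, ‖(v : V)‖) (g : X →L[𝕜] F) :
    ‖g‖ ≤ ‖g.comp γ‖ := by
  refine opNorm_le_bound _ (norm_nonneg _) fun t => ?_
  have : Nonempty {v : V // γ v = t} := let ⟨v, hv⟩ := hγ t; ⟨⟨v, hv⟩⟩
  rw [hquot t, Real.mul_iInf_of_nonneg (norm_nonneg _)]
  refine le_ciInf fun ⟨v, hv⟩ => ?_
  subst hv
  exact (g.comp γ).le_opNorm v

theorem div_opNorm_sq_mul_norm_sq_le {L : V →L[𝕜] StrongDual 𝕜 V} {c : ℝ} (hc : 0 ≤ c)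
    (hcoer : ∀ v : V, c * ‖v‖ ^ 2 ≤ ‖L v v‖) (v : V) :
    c / ‖L‖ ^ 2 * ‖L v‖ ^ 2 ≤ ‖L v v‖ := by
  rcases (norm_nonneg L).eq_or_lt with hL | hL
  · simp [← hL]
  calc c / ‖L‖ ^ 2 * ‖L v‖ ^ 2 ≤ c / ‖L‖ ^ 2 * (‖L‖ * ‖v‖) ^ 2 := by
        gcongr
        exact L.le_opNorm v
    _ = c * ‖v‖ ^ 2 := by field_simp
    _ ≤ ‖L v v‖ := hcoer v

end ContinuousLinearMap

theorem discrete_singleLayer_coercive_general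
    {V X : Type*} [NormedAddCommGroup V] [InnerProductSpace ℂ V]
    [NormedAddCommGroup X] [InnerProductSpace ℂ X]
    (L : V →L[ℂ] StrongDual ℂ V) (N : StrongDual ℂ V →L[ℂ] V)
    (hLN : ∀ f, L (N f) = f)
    (c_L : ℝ) (hc : 0 < c_L)
    (hcoer : ∀ v : V, c_L * ‖v‖ ^ 2 ≤ ‖L v v‖)
    (γ : V →L[ℂ] X) (hγsurj : Function.Surjective γ)
    (hquot : ∀ t : X, ‖t‖ = ⨅ v : {v : V // γ v = t}, ‖(v : V)‖)
    (P : V →L[ℂ] V)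
    (B_h : Submodule ℂ (StrongDual ℂ X))
    (ε_con : ℝ)
    (hεcon : ∀ g_h ∈ B_h, ∀ h_h ∈ B_h,
      ‖h_h (γ (N (gammaAdj γ g_h)) - γ (P (N (gammaAdj γ g_h))))‖ ≤
        ε_con * ‖g_h‖ * ‖h_h‖)
    (hsmall : ε_con ≤ c_L / (2 * ‖L‖ ^ 2)) :
    ∀ g_h ∈ B_h, c_L / (2 * ‖L‖ ^ 2) * ‖g_h‖ ^ 2 ≤
      ‖g_h (γ (P (N (gammaAdj γ g_h))))‖ := by
  intro g hg
  set v := N (gammaAdj γ g)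
  have hv : L v = g.comp γ := hLN _
  have hcont : c_L / ‖L‖ ^ 2 * ‖g‖ ^ 2 ≤ ‖g (γ v)‖ :=
    calc c_L / ‖L‖ ^ 2 * ‖g‖ ^ 2 ≤ c_L / ‖L‖ ^ 2 * ‖L v‖ ^ 2 := by
          rw [hv]
          gcongr
          exact ContinuousLinearMap.opNorm_le_opNorm_comp_of_norm_eq_iInf hγsurj hquot g
      _ ≤ ‖L v v‖ := L.div_opNorm_sq_mul_norm_sq_le hc.le hcoer v
      _ = ‖g (γ v)‖ := by rw [hv, ContinuousLinearMap.comp_apply]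
  have hpert : ‖g (γ v - γ (P v))‖ ≤ c_L / (2 * ‖L‖ ^ 2) * ‖g‖ ^ 2 := by
    rw [sq ‖g‖, ← mul_assoc]
    exact (hεcon g hg g hg).trans (by gcongr)
  have htri : ‖g (γ v)‖ ≤ ‖g (γ (P v))‖ + ‖g (γ v - γ (P v))‖ := by
    simpa only [map_sub] using norm_le_norm_add_norm_sub' (g (γ v)) (g (γ (P v)))
  rw [show c_L / ‖L‖ ^ 2 = 2 * (c_L / (2 * ‖L‖ ^ 2)) by ring] at hcont
  linarith

/-- coercivity of the discrete single-layer operator `𝖵_d = γ P_d S` on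
`B_h`: if `ε_con ≤ c_L/(2‖L‖²)`, then
`|⟨𝖵_d g_h, ḡ_h⟩| ≥ (c_L/(2‖L‖²)) ‖g_h‖²` for all `g_h ∈ B_h`. -/
theorem discrete_singleLayer_coercive
    {V X : Type*} [NormedAddCommGroup V] [InnerProductSpace ℂ V] [CompleteSpace V]
    [NormedAddCommGroup X] [InnerProductSpace ℂ X] [CompleteSpace X]
    (L : V →L[ℂ] StrongDual ℂ V) (N : StrongDual ℂ V →L[ℂ] V)
    (hNL : ∀ v, N (L v) = v) (hLN : ∀ f, L (N f) = f)
    (c_L : ℝ) (hc : 0 < c_L)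
    (hcoer : ∀ v : V, c_L * ‖v‖ ^ 2 ≤ ‖L v v‖)
    (γ : V →L[ℂ] X) (hγsurj : Function.Surjective γ)
    (hquot : ∀ t : X, ‖t‖ = ⨅ v : {v : V // γ v = t}, ‖(v : V)‖)
    (V_d : Submodule ℂ V) [FiniteDimensional ℂ V_d]
    (P : V →L[ℂ] V) (hPrange : ∀ v, P v ∈ V_d)
    (hPgal : ∀ v : V, ∀ w ∈ V_d, L (P v) w = L v w)
    (B_h : Submodule ℂ (StrongDual ℂ X)) [FiniteDimensional ℂ B_h]
    (ε_con : ℝ)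
    (hεcon : ∀ g_h ∈ B_h, ∀ h_h ∈ B_h,
      ‖h_h (γ (N (gammaAdj γ g_h)) - γ (P (N (gammaAdj γ g_h))))‖ ≤
        ε_con * ‖g_h‖ * ‖h_h‖)
    (hsmall : ε_con ≤ c_L / (2 * ‖L‖ ^ 2)) :
    ∀ g_h ∈ B_h, c_L / (2 * ‖L‖ ^ 2) * ‖g_h‖ ^ 2 ≤
      ‖g_h (γ (P (N (gammaAdj γ g_h))))‖ :=
  discrete_singleLayer_coercive_general L N hLN c_L hc hcoer γ hγsurj hquot P B_h ε_con hεcon hsmall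
end

section
/- The single-layer potential S : B → W is a bijection onto the space W of L-harmonic functions, with bounded inverse given by the jump operator J. -/
open NormedSpace

section QuotientFactor

variable {𝕜 V X F : Type*} [NontriviallyNormedField 𝕜]
  [NormedAddCommGroup V] [NormedSpace 𝕜 V] [NormedAddCommGroup X] [NormedSpace 𝕜 X]
  [NormedAddCommGroup F] [NormedSpace 𝕜 F]

theorem ContinuousLinearMap.opNorm_le_of_comp_eq_of_isQuotientNorm {γ : V →L[𝕜] X}
    (hγ : Function.Surjective γ) (hquot : ∀ t : X, ‖t‖ = ⨅ v : {v : V // γ v = t}, ‖(v : V)‖)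
    {φ : X →L[𝕜] F} {f : V →L[𝕜] F} (hφf : ∀ w, φ (γ w) = f w) : ‖φ‖ ≤ ‖f‖ := by
  refine φ.opNorm_le_bound (norm_nonneg f) fun t => ?_
  have : Nonempty {v : V // γ v = t} := nonempty_subtype.2 (hγ t)
  rw [hquot t, Real.mul_iInf_of_nonneg (norm_nonneg f)]
  refine le_ciInf fun ⟨w, hw⟩ => ?_
  calc ‖φ t‖ = ‖f w‖ := by rw [← hw, hφf]
    _ ≤ ‖f‖ * ‖w‖ := f.le_opNorm w

end QuotientFactor

section GammaAdj

variable {V X : Type*} [NormedAddCommGroup V] [NormedSpace ℂ V]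
  [NormedAddCommGroup X] [NormedSpace ℂ X] {γ : V →L[ℂ] X}

theorem gammaAdj_eq_iff {g : StrongDual ℂ X} {f : StrongDual ℂ V} :
    gammaAdj γ g = f ↔ ∀ w, g (γ w) = f w :=
  ContinuousLinearMap.ext_iff

theorem gammaAdj_injective (hγ : Function.Surjective γ) : Function.Injective (gammaAdj γ) :=
  fun g₁ g₂ h => ContinuousLinearMap.ext fun t => by
    obtain ⟨w, rfl⟩ := hγ t
    exact gammaAdj_eq_iff.1 h w

end GammaAdj

theorem singleLayer_bijection_onto_harmonic_general
    {V X : Type*} [NormedAddCommGroup V] [InnerProductSpace ℂ V]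
    [NormedAddCommGroup X] [InnerProductSpace ℂ X]
    (L : V →L[ℂ] StrongDual ℂ V) (N : StrongDual ℂ V →L[ℂ] V)
    (hNL : ∀ v, N (L v) = v) (hLN : ∀ f, L (N f) = f)
    (γ : V →L[ℂ] X) (hγsurj : Function.Surjective γ)
    (hquot : ∀ t : X, ‖t‖ = ⨅ v : {v : V // γ v = t}, ‖(v : V)‖)
    (J : V → StrongDual ℂ X)
    (hJ : ∀ v : V, (∀ w : V, γ w = 0 → L v w = 0) →
      ∀ w : V, J v (γ w) = L v w) :
    Set.BijOn (fun g : StrongDual ℂ X => N (gammaAdj γ g)) Set.univ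
      {v : V | ∀ w : V, γ w = 0 → L v w = 0} ∧
    (∀ v ∈ {v : V | ∀ w : V, γ w = 0 → L v w = 0}, N (gammaAdj γ (J v)) = v) ∧
    ∃ C : ℝ, 0 < C ∧ ∀ v ∈ {v : V | ∀ w : V, γ w = 0 → L v w = 0},
      ‖J v‖ ≤ C * ‖v‖ := by
  set W := {v : V | ∀ w : V, γ w = 0 → L v w = 0}
  have hJL : ∀ v ∈ W, gammaAdj γ (J v) = L v := fun v hv => gammaAdj_eq_iff.2 (hJ v hv)
  have hSW : ∀ g, N (gammaAdj γ g) ∈ W := fun g w hw => by simp [hLN, hw]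
  have hSJ : ∀ v ∈ W, N (gammaAdj γ (J v)) = v := fun v hv => by rw [hJL v hv, hNL]
  have hJS : ∀ g, J (N (gammaAdj γ g)) = g := fun g =>
    gammaAdj_injective hγsurj (by rw [hJL _ (hSW g), hLN])
  refine ⟨Set.InvOn.bijOn ⟨fun g _ => hJS g, hSJ⟩ (fun g _ => hSW g) (Set.mapsTo_univ _ _),
    hSJ, ‖L‖ + 1, by positivity, fun v hv => ?_⟩
  calc ‖J v‖ ≤ ‖L v‖ :=
        ContinuousLinearMap.opNorm_le_of_comp_eq_of_isQuotientNorm hγsurj hquot (hJ v hv)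
    _ ≤ ‖L‖ * ‖v‖ := L.le_opNorm v
    _ ≤ (‖L‖ + 1) * ‖v‖ := by gcongr; linarith

/-- the single-layer potential `S = L⁻¹ γ'` is a bijection from `B` onto
the space `W = {v : ℓ(v,w) = 0 ∀ w ∈ ker γ}` of `L`-harmonic functions, with bounded
inverse given by the jump operator `J` (defined by `⟨J v, γ w⟩ = ℓ(v, w)`). -/
theorem singleLayer_bijection_onto_harmonic
    {V X : Type*} [NormedAddCommGroup V] [InnerProductSpace ℂ V] [CompleteSpace V]
    [NormedAddCommGroup X] [InnerProductSpace ℂ X] [CompleteSpace X]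
    (L : V →L[ℂ] StrongDual ℂ V) (N : StrongDual ℂ V →L[ℂ] V)
    (hNL : ∀ v, N (L v) = v) (hLN : ∀ f, L (N f) = f)
    (c_L : ℝ) (hc : 0 < c_L)
    (hcoer : ∀ v : V, c_L * ‖v‖ ^ 2 ≤ ‖L v v‖)
    (γ : V →L[ℂ] X) (hγsurj : Function.Surjective γ)
    (hquot : ∀ t : X, ‖t‖ = ⨅ v : {v : V // γ v = t}, ‖(v : V)‖)
    (J : V → StrongDual ℂ X)
    (hJ : ∀ v : V, (∀ w : V, γ w = 0 → L v w = 0) →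
      ∀ w : V, J v (γ w) = L v w) :
    Set.BijOn (fun g : StrongDual ℂ X => N (gammaAdj γ g)) Set.univ
      {v : V | ∀ w : V, γ w = 0 → L v w = 0} ∧
    (∀ v ∈ {v : V | ∀ w : V, γ w = 0 → L v w = 0}, N (gammaAdj γ (J v)) = v) ∧
    ∃ C : ℝ, 0 < C ∧ ∀ v ∈ {v : V | ∀ w : V, γ w = 0 → L v w = 0},
      ‖J v‖ ≤ C * ‖v‖ :=
  singleLayer_bijection_onto_harmonic_general L N hNL hLN γ hγsurj hquot J hJ
end
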